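/- arXiv:2402.07679 — 7 statements merged into one kernel-verified Lean document; each statement's English description precedes it below -/
import Mathlib

section
/- If φ : G₁ ×_{ε₁} G₂ → G₁ ×_{ε₂} G₂ is a group homomorphism with components φ_{ij}, then for all y,y' ∈ G₂: φ₂₁(ε₁(y,y')) = φ₂₂(y) φ₂₂(y') φ₂₂(yy')⁻¹; in particular, if ε₁ takes values in the kernel of φ₂₁, then φ₂₂ is an endomorphism of G₂. -/
/-- A normalized 2-cocycle of `B` with coefficients in `A` (trivial action). -/
def IsCocycle {A B : Type*} [Group A] [Group B] (ε : B → B → A) : Prop :=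
  (∀ g h k : B, ε h g * ε (h * g) k = ε g k * ε h (g * k)) ∧
  (∀ g : B, ε g 1 = 1) ∧ (∀ g : B, ε 1 g = 1)

/-- The twisted multiplication on `G₁ × G₂` induced by a 2-cocycle `ε`. -/
def twMul {G₁ G₂ : Type*} [Group G₁] [Group G₂] (ε : G₂ → G₂ → G₁) :
    G₁ × G₂ → G₁ × G₂ → G₁ × G₂ :=
  fun p q => (p.1 * q.1 * ε p.2 q.2, p.2 * q.2)

/-- `φ` is a group homomorphism from `G₁ ×_{ε₁} G₂` to `G₁ ×_{ε₂} G₂`. -/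
def IsTwHom {G₁ G₂ : Type*} [Group G₁] [Group G₂] (ε₁ ε₂ : G₂ → G₂ → G₁)
    (φ : G₁ × G₂ → G₁ × G₂) : Prop :=
  ∀ p q, φ (twMul ε₁ p q) = twMul ε₂ (φ p) (φ q)

theorem stmt_11 {G₁ G₂ : Type*} [CommGroup G₁] [Group G₂] (ε₁ ε₂ : G₂ → G₂ → G₁)
    (hε₁ : IsCocycle ε₁) (hε₂ : IsCocycle ε₂)
    (φ : G₁ × G₂ → G₁ × G₂) (hφ : IsTwHom ε₁ ε₂ φ) :
    (∀ y y' : G₂,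
      (φ (ε₁ y y', 1)).2 = (φ (1, y)).2 * (φ (1, y')).2 * ((φ (1, y * y')).2)⁻¹) ∧
    ((∀ y y' : G₂, (φ (ε₁ y y', 1)).2 = 1) →
      ∀ y y' : G₂, (φ (1, y * y')).2 = (φ (1, y)).2 * (φ (1, y')).2) := by
  obtain ⟨hc, hr, hl⟩ := hε₁
  have key : ∀ y y' : G₂,
      (φ (1, y)).2 * (φ (1, y')).2 = (φ (ε₁ y y', 1)).2 * (φ (1, y * y')).2 := by
    intro y y'
    have h1 := hφ (1, y) (1, y')
    have h2 := hφ (ε₁ y y', 1) (1, y * y')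
    have e1 : twMul ε₁ (1, y) (1, y') = (ε₁ y y', y * y') := by
      simp [twMul]
    have e2 : twMul ε₁ ((ε₁ y y', 1) : G₁ × G₂) (1, y * y') = (ε₁ y y', y * y') := by
      simp [twMul, hl]
    rw [e1] at h1; rw [e2] at h2
    have := h1.symm.trans h2
    have := congrArg Prod.snd this
    simpa [twMul] using this
  constructor
  · intro y y'
    have := key y y'
    group
    rw [this]
    group
  · intro h y y'
    have := key y y'
    rw [h] at this
    simpa using this.symm
end

section
/- If φ : G₁ ×_{ε₁} G₂ → G₁ ×_{ε₂} G₂ is a group homomorphism, then φ₁₁(xx') = φ₁₁(x) φ₁₁(x') ε₂(φ₂₁(x), φ₂₁(x')) for all x, x' ∈ G₁; in particular ε₂⁻¹ ∘ (φ₂₁ × φ₂₁) is the 2-coboundary of φ₁₁. -/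
theorem stmt_12 {G₁ G₂ : Type*} [CommGroup G₁] [Group G₂] (ε₁ ε₂ : G₂ → G₂ → G₁)
    (hε₁ : IsCocycle ε₁) (hε₂ : IsCocycle ε₂)
    (φ : G₁ × G₂ → G₁ × G₂) (hφ : IsTwHom ε₁ ε₂ φ) :
    (∀ x x' : G₁,
      (φ (x * x', 1)).1 = (φ (x, 1)).1 * (φ (x', 1)).1 * ε₂ (φ (x, 1)).2 (φ (x', 1)).2) ∧
    (∀ x x' : G₁,
      (ε₂ (φ (x, 1)).2 (φ (x', 1)).2)⁻¹ =
        (φ (x, 1)).1 * (φ (x', 1)).1 * ((φ (x * x', 1)).1)⁻¹) := by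
  have key : ∀ x x' : G₁,
      (φ (x * x', 1)).1 = (φ (x, 1)).1 * (φ (x', 1)).1 * ε₂ (φ (x, 1)).2 (φ (x', 1)).2 := by
    intro x x'
    have h := hφ (x, 1) (x', 1)
    simp [twMul, hε₁.2.1] at h
    rw [h]
  refine ⟨key, fun x x' => ?_⟩
  rw [key x x']
  simp [mul_inv, mul_comm, mul_left_comm, mul_assoc]
end

section
/- If G₂ is a simple non-abelian group and φ : G₁ ×_{ε₁} G₂ → G₁ ×_{ε₂} G₂ is a group isomorphism, then φ maps G₁ × {1} into G₁ × {1}; i.e. any isomorphism between such central extensions is upper (leaves G₁ invariant). -/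
theorem stmt_13 {G₁ G₂ : Type*} [CommGroup G₁] [Group G₂] [IsSimpleGroup G₂]
    (hna : ∃ a b : G₂, a * b ≠ b * a)
    (ε₁ ε₂ : G₂ → G₂ → G₁) (hε₁ : IsCocycle ε₁) (hε₂ : IsCocycle ε₂)
    (φ : G₁ × G₂ → G₁ × G₂) (hφ : IsTwHom ε₁ ε₂ φ) (hbij : Function.Bijective φ) :
    ∀ x : G₁, (φ (x, 1)).2 = 1 := by
  intro x
  have central : ∀ q, twMul ε₁ (x, 1) q = twMul ε₁ q (x, 1) := by
    intro q
    simp [twMul, hε₁.2.1, hε₁.2.2, mul_comm]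
  have hcomm : ∀ g : G₂, (φ (x, 1)).2 * g = g * (φ (x, 1)).2 := by
    intro g
    obtain ⟨p, hp⟩ := hbij.2 (1, g)
    have h := congrArg (fun r => r.2) (by rw [← hφ, ← hφ, central p] :
      twMul ε₂ (φ (x, 1)) (φ p) = twMul ε₂ (φ p) (φ (x, 1)))
    simpa [twMul, hp] using h
  have hz : (φ (x, 1)).2 ∈ Subgroup.center G₂ :=
    Subgroup.mem_center_iff.mpr fun g => (hcomm g).symm
  have hbot : Subgroup.center G₂ = ⊥ := by
    rcases IsSimpleGroup.eq_bot_or_eq_top_of_normal (Subgroup.center G₂) inferInstance with h | h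
    · exact h
    · obtain ⟨a, b, hab⟩ := hna
      exact absurd ((Subgroup.mem_center_iff.mp (h ▸ Subgroup.mem_top a)) b).symm hab
  simpa [hbot] using hz
end

section
/- If φ : G₁ ×_{ε₁} G₂ → G₁ ×_{ε₂} G₂ is a group isomorphism, then the subgroup φ₂₁(G₁) = { pr₂(φ(x,1)) : x ∈ G₁ } is a normal subgroup of G₂ contained in the centralizer of φ₂₂(G₂). -/
/-!
Since `G₁` is abelian and `ε₁` is normalized, `G₁ × {1}` is a subgroup of the centre of
`G₁ ×_{ε₁} G₂` on which the twisted product is the plain one. Hence `φ₂₁ = pr₂ ∘ φ ∘ (·, 1)` is a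
homomorphism `G₁ → G₂`, and, `φ` being surjective and `pr₂` a homomorphism onto `G₂`, its image
lies in the centre of `G₂`; a central subgroup is normal and centralizes everything.
-/

namespace IsCocycle

variable {G₁ G₂ : Type*} [Group G₂]

theorem twMul_inl_inl [Group G₁] {ε : G₂ → G₂ → G₁} (hε : IsCocycle ε) (x y : G₁) :
    twMul ε (x, 1) (y, 1) = (x * y, 1) := by
  simp [twMul, hε.2.1]

theorem twMul_inl_comm [CommGroup G₁] {ε : G₂ → G₂ → G₁} (hε : IsCocycle ε)
    (x : G₁) (p : G₁ × G₂) : twMul ε (x, 1) p = twMul ε p (x, 1) := by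
  simp [twMul, hε.2.1, hε.2.2, mul_comm x]

end IsCocycle

namespace IsTwHom

variable {G₁ G₂ : Type*} [Group G₂] {ε₁ ε₂ : G₂ → G₂ → G₁} {φ : G₁ × G₂ → G₁ × G₂}

/-- The paper's `φ₂₁`. -/
def hom₂₁ [Group G₁] (hφ : IsTwHom ε₁ ε₂ φ) (hε₁ : IsCocycle ε₁) : G₁ →* G₂ :=
  MonoidHom.mk' (fun x => (φ (x, 1)).2) fun x y => by
    rw [← hε₁.twMul_inl_inl, hφ]
    rfl

theorem range_hom₂₁_le_center [CommGroup G₁] (hφ : IsTwHom ε₁ ε₂ φ) (hε₁ : IsCocycle ε₁)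
    (hsurj : Function.Surjective φ) : (hφ.hom₂₁ hε₁).range ≤ Subgroup.center G₂ := by
  rintro _ ⟨x, rfl⟩
  refine Subgroup.mem_center_iff.mpr fun g => ?_
  obtain ⟨p, hp⟩ := hsurj (1, g)
  have hcomm := congrArg (fun q => (φ q).2) (hε₁.twMul_inl_comm x p)
  rw [hφ, hφ, hp] at hcomm
  exact hcomm.symm

end IsTwHom

theorem stmt_14_general {G₁ G₂ : Type*} [CommGroup G₁] [Group G₂]
    (ε₁ ε₂ : G₂ → G₂ → G₁) (hε₁ : IsCocycle ε₁)
    (φ : G₁ × G₂ → G₁ × G₂) (hφ : IsTwHom ε₁ ε₂ φ) (hbij : Function.Bijective φ) :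
    let S : Set G₂ := Set.range fun x : G₁ => (φ (x, 1)).2
    (1 ∈ S) ∧ (∀ a ∈ S, ∀ b ∈ S, a * b ∈ S) ∧ (∀ a ∈ S, a⁻¹ ∈ S) ∧
    (∀ g : G₂, ∀ a ∈ S, g * a * g⁻¹ ∈ S) ∧
    (∀ a ∈ S, ∀ y : G₂, a * (φ (1, y)).2 = (φ (1, y)).2 * a) := by
  intro S
  set H := (hφ.hom₂₁ hε₁).range
  have hS : S = H := rfl
  have hcentral : ∀ a ∈ H, ∀ g : G₂, g * a = a * g := fun a ha =>
    Subgroup.mem_center_iff.mp (hφ.range_hom₂₁_le_center hε₁ hbij.2 ha)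
  rw [hS]
  refine ⟨H.one_mem, fun a ha b hb => H.mul_mem ha hb, fun a ha => H.inv_mem ha,
    fun g a ha => ?_, fun a ha y => (hcentral a ha _).symm⟩
  rwa [hcentral a ha g, mul_inv_cancel_right]

theorem stmt_14 {G₁ G₂ : Type*} [CommGroup G₁] [Group G₂]
    (ε₁ ε₂ : G₂ → G₂ → G₁) (hε₁ : IsCocycle ε₁) (hε₂ : IsCocycle ε₂)
    (φ : G₁ × G₂ → G₁ × G₂) (hφ : IsTwHom ε₁ ε₂ φ) (hbij : Function.Bijective φ) :
    let S : Set G₂ := Set.range fun x : G₁ => (φ (x, 1)).2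
    (1 ∈ S) ∧ (∀ a ∈ S, ∀ b ∈ S, a * b ∈ S) ∧ (∀ a ∈ S, a⁻¹ ∈ S) ∧
    (∀ g : G₂, ∀ a ∈ S, g * a * g⁻¹ ∈ S) ∧
    (∀ a ∈ S, ∀ y : G₂, a * (φ (1, y)).2 = (φ (1, y)).2 * a) :=
  stmt_14_general ε₁ ε₂ hε₁ φ hφ hbij
end

section
/- Let ε ∈ Z²(G₂,G₁). The twisted product G₁ ×_ε G₂ and the direct product G₁ × G₂ are isomorphic by an isomorphism leaving G₁ invariant if and only if there exists σ ∈ Aut(G₁) such that σ ∘ ε ∈ B²(G₂,G₁). -/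
/-!
An isomorphism `φ : G₁ ×_ε G₂ → G₁ × G₂` preserving `G₁ × {1}` restricts to an automorphism `σ`
of `G₁`, and `t y := (φ (1, y)).1` is the required cochain: applying `φ` to the identity
`(1, y) (1, y') = (ε y y', 1) (1, y y')` in `G₁ ×_ε G₂` gives `t y * t y' = σ (ε y y') * t (y y')`.
Conversely, if `σ ∘ ε` is the coboundary of `t`, then `(x, y) ↦ (σ x * t y, y)` is such an
isomorphism.
-/

namespace IsTwHom

variable {G₁ G₂ : Type*} [Group G₁] [Group G₂] {ε₁ ε₂ : G₂ → G₂ → G₁}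
  {φ : G₁ × G₂ → G₁ × G₂}

theorem map_one_one (hφ : IsTwHom ε₁ ε₂ φ) (h₁ : ε₁ 1 1 = 1) (h₂ : ε₂ 1 1 = 1) :
    φ (1, 1) = (1, 1) := by
  have h := hφ (1, 1) (1, 1)
  simp only [twMul, mul_one, h₁] at h
  generalize φ (1, 1) = p at h
  have hsnd : p.2 = 1 := right_eq_mul.mp (congrArg Prod.snd h)
  have hfst : p.1 = p.1 * p.1 := by simpa [hsnd, h₂] using congrArg Prod.fst h
  exact Prod.ext (right_eq_mul.mp hfst) hsnd

theorem exists_mulEquiv_fst_map (hφ : IsTwHom ε₁ ε₂ φ) (h₁ : ε₁ 1 1 = 1) (h₂ : ε₂ 1 1 = 1)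
    (hinj : Function.Injective φ)
    (himg : φ '' {p : G₁ × G₂ | p.2 = 1} = {p : G₁ × G₂ | p.2 = 1}) :
    ∃ σ : G₁ ≃* G₁, ∀ x, σ x = (φ (x, 1)).1 := by
  have hsnd (x : G₁) : (φ (x, 1)).2 = 1 := himg.subset ⟨(x, 1), rfl, rfl⟩
  let F : G₁ →* G₁ :=
    { toFun x := (φ (x, 1)).1
      map_one' := by simp only [hφ.map_one_one h₁ h₂]
      map_mul' x x' := by simpa [twMul, h₁, h₂, hsnd] using congrArg Prod.fst (hφ (x, 1) (x', 1)) }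
  have hF_inj : Function.Injective F := fun x x' hxx' =>
    congrArg Prod.fst <| hinj <| Prod.ext hxx' ((hsnd x).trans (hsnd x').symm)
  have hF_surj : Function.Surjective F := by
    intro z
    obtain ⟨p, hp, hpz⟩ := himg.superset (show (z, (1 : G₂)).2 = 1 from rfl)
    refine ⟨p.1, ?_⟩
    change (φ (p.1, 1)).1 = z
    rw [show (p.1, (1 : G₂)) = p from Prod.ext rfl hp.symm, hpz]
  exact ⟨MulEquiv.ofBijective F ⟨hF_inj, hF_surj⟩, fun _ => rfl⟩

theorem fst_map_cocycle_mul {ε : G₂ → G₂ → G₁} (hφ : IsTwHom ε (fun _ _ => 1) φ)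
    (hε : ∀ g, ε 1 g = 1) (y y' : G₂) :
    (φ (ε y y', 1)).1 * (φ (1, y * y')).1 = (φ (1, y)).1 * (φ (1, y')).1 := by
  have h := hφ (1, y) (1, y')
  have h' := hφ (ε y y', 1) (1, y * y')
  simp only [twMul, hε, one_mul, mul_one] at h h'
  exact congrArg Prod.fst (h'.symm.trans h)

end IsTwHom

section Coboundary

variable {G₁ G₂ : Type*} [Group G₂]

def prodShearEquiv [Group G₁] (σ : G₁ ≃* G₁) (t : G₂ → G₁) : G₁ × G₂ ≃ G₁ × G₂ where
  toFun p := (σ p.1 * t p.2, p.2)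
  invFun p := (σ.symm (p.1 * (t p.2)⁻¹), p.2)
  left_inv p := by simp
  right_inv p := by simp

theorem image_prodShearEquiv_snd_eq_one [Group G₁] (σ : G₁ ≃* G₁) (t : G₂ → G₁) :
    prodShearEquiv σ t '' {p | p.2 = 1} = {p | p.2 = 1} := by
  rw [Equiv.image_eq_preimage_symm]
  rfl

theorem isTwHom_prodShearEquiv [CommGroup G₁] {ε : G₂ → G₂ → G₁} {σ : G₁ ≃* G₁}
    {t : G₂ → G₁} (ht : ∀ y y', σ (ε y y') = t y * t y' * (t (y * y'))⁻¹) :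
    IsTwHom ε (fun _ _ => 1) (prodShearEquiv σ t) := by
  rintro ⟨x, y⟩ ⟨x', y'⟩
  refine Prod.ext ?_ rfl
  change σ (x * x' * ε y y') * t (y * y') = σ x * t y * (σ x' * t y') * 1
  rw [map_mul, map_mul, ht, mul_one, mul_assoc _ (_ * _ * _⁻¹),
    inv_mul_cancel_right, mul_mul_mul_comm]

end Coboundary

theorem stmt_16 {G₁ G₂ : Type*} [CommGroup G₁] [Group G₂]
    (ε : G₂ → G₂ → G₁) (hε : IsCocycle ε) :
    (∃ φ : G₁ × G₂ → G₁ × G₂, Function.Bijective φ ∧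
        IsTwHom ε (fun _ _ => (1 : G₁)) φ ∧
        φ '' {p : G₁ × G₂ | p.2 = 1} = {p : G₁ × G₂ | p.2 = 1}) ↔
      (∃ σ : G₁ ≃* G₁, ∃ t : G₂ → G₁, t 1 = 1 ∧
        ∀ y y' : G₂, σ (ε y y') = t y * t y' * (t (y * y'))⁻¹) := by
  obtain ⟨-, hε_right, hε_left⟩ := hε
  constructor
  · rintro ⟨φ, hbij, hφ, himg⟩
    obtain ⟨σ, hσ⟩ := hφ.exists_mulEquiv_fst_map (hε_right 1) rfl hbij.injective himg
    refine ⟨σ, fun y => (φ (1, y)).1, by simp [hφ.map_one_one (hε_right 1) rfl], fun y y' => ?_⟩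
    rw [hσ, eq_mul_inv_iff_mul_eq]
    exact hφ.fst_map_cocycle_mul hε_left y y'
  · rintro ⟨σ, t, -, ht⟩
    exact ⟨prodShearEquiv σ t, (prodShearEquiv σ t).bijective, isTwHom_prodShearEquiv ht,
      image_prodShearEquiv_snd_eq_one σ t⟩
end

section
/- Let G₂ be a group such that the only normalized 2-cocycle in Z²(G₂,G₂) cohomologous to the trivial one is the trivial one. If the twisted product G₁ ×_ε G₂ and the direct product G₁ × G₂ are isomorphic by an isomorphism leaving G₂ invariant (i.e. φ({1} × G₂) = {1} × G₂), then ε = 1. -/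
theorem stmt_17 {G₁ G₂ : Type*} [CommGroup G₁] [Group G₂]
    (hG₂ : ∀ ε' : G₂ → G₂ → G₂, IsCocycle ε' →
      (∃ t : G₂ → G₂, ∀ g h : G₂, (1 : G₂) = t g * t h * ε' g h * (t (g * h))⁻¹) →
      ∀ g h : G₂, ε' g h = 1)
    (ε : G₂ → G₂ → G₁) (hε : IsCocycle ε)
    (φ : G₁ × G₂ → G₁ × G₂) (hbij : Function.Bijective φ)
    (hφ : IsTwHom ε (fun _ _ => (1 : G₁)) φ)
    (hlow : φ '' {p : G₁ × G₂ | p.1 = 1} = {p : G₁ × G₂ | p.1 = 1}) :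
    ∀ y y' : G₂, ε y y' = 1 := by
  intro y y'
  have hmem : ∀ g : G₂, (φ (1, g)).1 = 1 := by
    intro g
    have : φ (1, g) ∈ {p : G₁ × G₂ | p.1 = 1} := by
      rw [← hlow]; exact ⟨(1, g), rfl, rfl⟩
    exact this
  have key : φ (ε y y', y * y')
      = twMul (fun _ _ => (1 : G₁)) (φ (1, y)) (φ (1, y')) := by
    have h := hφ (1, y) (1, y')
    simpa [twMul] using h
  have h1 : (φ (ε y y', y * y')).1 = 1 := by
    rw [key]; simp [twMul, hmem]
  have hS : φ (ε y y', y * y') ∈ {p : G₁ × G₂ | p.1 = 1} := h1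
  rw [← hlow] at hS
  obtain ⟨p, hp, hpe⟩ := hS
  have heq := hbij.1 hpe
  have hp' : p.1 = 1 := hp
  rw [heq] at hp'
  exact hp'
end

section
/- Suppose G₁ and G₂ are finite abelian groups of the same order, ε₁ = 1, and there is an isomorphism δ : G₁ → G₂ and a map σ : G₁ → G₁ with σ(1)=1 such that ε₂(δ(x),δ(x'))⁻¹ = σ(x)σ(x')σ(xx')⁻¹ for all x,x' ∈ G₁. Then φ(x,y) = (σ(x)δ⁻¹(y), δ(x)) is a group isomorphism from G₁ × G₂ to G₁ ×_{ε₂} G₂ whose (2,2)-component is trivial (pr₂(φ(1,y)) = 1 for all y). -/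
lemma aux_cancel {G : Type*} [CommGroup G] (a b c d e : G) :
    a * d * (b * e) * (c * a⁻¹ * b⁻¹) = c * (d * e) := by
  calc a * d * (b * e) * (c * a⁻¹ * b⁻¹)
      = (a * a⁻¹) * ((b * b⁻¹) * (c * (d * e))) := by
        simp only [mul_comm, mul_left_comm, mul_assoc]
    _ = c * (d * e) := by simp

theorem stmt_19 {G₁ G₂ : Type*} [CommGroup G₁] [CommGroup G₂]
    [Fintype G₁] [Fintype G₂] (hcard : Fintype.card G₁ = Fintype.card G₂)
    (ε₂ : G₂ → G₂ → G₁) (hε₂ : IsCocycle ε₂)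
    (δ : G₁ ≃* G₂) (σ : G₁ → G₁) (hσ1 : σ 1 = 1)
    (hcob : ∀ x x' : G₁,
      (ε₂ (δ x) (δ x'))⁻¹ = σ x * σ x' * (σ (x * x'))⁻¹) :
    let φ : G₁ × G₂ → G₁ × G₂ := fun p => (σ p.1 * δ.symm p.2, δ p.1)
    Function.Bijective φ ∧ IsTwHom (fun _ _ => (1 : G₁)) ε₂ φ ∧
      ∀ y : G₂, (φ (1, y)).2 = 1 := by
  intro φ
  have hε : ∀ x x' : G₁, ε₂ (δ x) (δ x') = σ (x * x') * (σ x)⁻¹ * (σ x')⁻¹ := by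
    intro x x'
    have h2 : ε₂ (δ x) (δ x') = (σ x * σ x' * (σ (x * x'))⁻¹)⁻¹ := by
      rw [← hcob x x', inv_inv]
    rw [h2, mul_inv_rev, mul_inv_rev, inv_inv]
    simp only [mul_comm, mul_left_comm, mul_assoc]
  refine ⟨?_, ?_, ?_⟩
  · refine Function.bijective_iff_has_inverse.2
      ⟨fun p => (δ.symm p.2, δ (p.1 * (σ (δ.symm p.2))⁻¹)), ?_, ?_⟩
    · rintro ⟨x, y⟩
      simp only [φ]
      ext
      · simp
      · simp only [MulEquiv.symm_apply_apply, mul_inv_cancel_comm]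
        simp
    · rintro ⟨a, b⟩
      simp only [φ]
      ext
      · simp only [MulEquiv.symm_apply_apply, mul_inv_cancel_left, mul_inv_cancel_comm,
          mul_comm, mul_left_comm]
        simp
      · simp
  · rintro ⟨x, y⟩ ⟨x', y'⟩
    simp only [φ, twMul, mul_one, map_mul, hε]
    ext
    · show σ (x * x') * (δ.symm y * δ.symm y') =
        σ x * δ.symm y * (σ x' * δ.symm y') * (σ (x * x') * (σ x)⁻¹ * (σ x')⁻¹)
      rw [aux_cancel]
    · rfl
  · intro y
    simp [φ]
end
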